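/- arXiv:1409.0762 — 4 statements merged into one kernel-verified Lean document; each statement's English description precedes it below -/
import Mathlib

section
/- Let u : ℝ → ℝ be smooth on an open interval I with u(x) > 0, and suppose the graph of u lies on a conic: A·x² + B·x·u(x) + C·u(x)² + D·x + E·u(x) + F = 0 on I for constants A,B,C,D,E,F not all zero, with the nondegeneracy condition that the partial derivative of the conic polynomial in the u-direction, B·x + 2C·u(x) + E, is nonvanishing on I. Then u satisfies the fifth-order ODE 9·u⁽⁵⁾·(u'')² + 40·(u''')³ - 45·u''·u'''·u⁽⁴⁾ = 0 on I. -/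
open Filter Set

/-- Chain of derivatives of the conic polynomial along the graph of `u`. -/
theorem aux_chain (u : ℝ → ℝ) (hu : ContDiff ℝ (⊤ : ℕ∞) u) (A B C D E F : ℝ) (x0 : ℝ)
    (h : (fun x => A * x ^ 2 + B * (x * u x) + C * (u x ^ 2) + D * x + E * u x + F)
        =ᶠ[nhds x0] fun _ => (0:ℝ)) :
    (B * (x0 * iteratedDeriv 3 u x0 + 3 * iteratedDeriv 2 u x0)
      + 2 * C * (u x0 * iteratedDeriv 3 u x0 + 3 * iteratedDeriv 1 u x0 * iteratedDeriv 2 u x0)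
      + E * iteratedDeriv 3 u x0 = 0) ∧
    (B * (x0 * iteratedDeriv 4 u x0 + 4 * iteratedDeriv 3 u x0)
      + 2 * C * (u x0 * iteratedDeriv 4 u x0 + 4 * iteratedDeriv 1 u x0 * iteratedDeriv 3 u x0
          + 3 * (iteratedDeriv 2 u x0) ^ 2)
      + E * iteratedDeriv 4 u x0 = 0) ∧
    (B * (x0 * iteratedDeriv 5 u x0 + 5 * iteratedDeriv 4 u x0)
      + 2 * C * (u x0 * iteratedDeriv 5 u x0 + 5 * iteratedDeriv 1 u x0 * iteratedDeriv 4 u x0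
          + 10 * iteratedDeriv 2 u x0 * iteratedDeriv 3 u x0)
      + E * iteratedDeriv 5 u x0 = 0) := by
  have hd : ∀ n : ℕ, Differentiable ℝ (iteratedDeriv n u) := by
    intro n
    rw [iteratedDeriv_eq_iterate]
    have hu' : ContDiff ℝ ((⊤:ℕ∞) : WithTop ℕ∞) u := hu.of_le (by simp)
    exact (hu'.iterate_deriv n).differentiable (by simp)
  have hU : ∀ (n : ℕ) (x : ℝ), HasDerivAt (iteratedDeriv n u) (iteratedDeriv (n+1) u x) x := by
    intro n x
    have := ((hd n) x).hasDerivAt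
    rwa [← iteratedDeriv_succ] at this
  have hU0 : ∀ x : ℝ, HasDerivAt u (iteratedDeriv 1 u x) x := by
    intro x
    have := hU 0 x
    rwa [iteratedDeriv_zero] at this
  have h0 : ∀ x, HasDerivAt
      (fun x => A * x ^ 2 + B * (x * u x) + C * (u x ^ 2) + D * x + E * u x + F)
      (2*A*x + B*(u x + x*iteratedDeriv 1 u x) + 2*C*(u x*iteratedDeriv 1 u x) + D + E*iteratedDeriv 1 u x) x := by
    intro x
    have t := ((((((hasDerivAt_pow 2 x).const_mul A).add
        (((hasDerivAt_id' (𝕜 := ℝ) x).mul (hU0 x)).const_mul B)).add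
        (((hU0 x).pow 2).const_mul C)).add
        ((hasDerivAt_id' (𝕜 := ℝ) x).const_mul D)).add
        ((hU0 x).const_mul E)).add_const F
    refine t.congr_deriv ?_
    norm_num [iteratedDeriv_one]
    ring
  have h1 : ∀ x, HasDerivAt
      (fun x => 2*A*x + B*(u x + x*iteratedDeriv 1 u x) + 2*C*(u x*iteratedDeriv 1 u x) + D + E*iteratedDeriv 1 u x)
      (2*A + B*(2*iteratedDeriv 1 u x + x*iteratedDeriv 2 u x) + 2*C*(iteratedDeriv 1 u x^2 + u x*iteratedDeriv 2 u x) + E*iteratedDeriv 2 u x) x := by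
    intro x
    have t := (((((hasDerivAt_id' (𝕜 := ℝ) x).const_mul (2*A)).add
        (((hU0 x).add ((hasDerivAt_id' (𝕜 := ℝ) x).mul (hU 1 x))).const_mul B)).add
        (((hU0 x).mul (hU 1 x)).const_mul (2*C))).add_const D).add
        ((hU 1 x).const_mul E)
    refine t.congr_deriv ?_
    norm_num [iteratedDeriv_one]
    ring
  have h2 : ∀ x, HasDerivAt
      (fun x => 2*A + B*(2*iteratedDeriv 1 u x + x*iteratedDeriv 2 u x) + 2*C*(iteratedDeriv 1 u x^2 + u x*iteratedDeriv 2 u x) + E*iteratedDeriv 2 u x)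
      (B*(3*iteratedDeriv 2 u x + x*iteratedDeriv 3 u x) + 2*C*(3*(iteratedDeriv 1 u x*iteratedDeriv 2 u x) + u x*iteratedDeriv 3 u x) + E*iteratedDeriv 3 u x) x := by
    intro x
    have t := ((((((hU 1 x).const_mul 2).add
        ((hasDerivAt_id' (𝕜 := ℝ) x).mul (hU 2 x))).const_mul B).const_add (2*A)).add
        ((((hU 1 x).pow 2).add ((hU0 x).mul (hU 2 x))).const_mul (2*C))).add
        ((hU 2 x).const_mul E)
    refine t.congr_deriv ?_
    norm_num [iteratedDeriv_one]
    ring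
  have h3 : ∀ x, HasDerivAt
      (fun x => B*(3*iteratedDeriv 2 u x + x*iteratedDeriv 3 u x) + 2*C*(3*(iteratedDeriv 1 u x*iteratedDeriv 2 u x) + u x*iteratedDeriv 3 u x) + E*iteratedDeriv 3 u x)
      (B*(4*iteratedDeriv 3 u x + x*iteratedDeriv 4 u x) + 2*C*(4*(iteratedDeriv 1 u x*iteratedDeriv 3 u x) + 3*iteratedDeriv 2 u x^2 + u x*iteratedDeriv 4 u x) + E*iteratedDeriv 4 u x) x := by
    intro x
    have t := (((((hU 2 x).const_mul 3).add
        ((hasDerivAt_id' (𝕜 := ℝ) x).mul (hU 3 x))).const_mul B).add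
        (((((hU 1 x).mul (hU 2 x)).const_mul 3).add
          ((hU0 x).mul (hU 3 x))).const_mul (2*C))).add
        ((hU 3 x).const_mul E)
    refine t.congr_deriv ?_
    norm_num [iteratedDeriv_one]
    ring
  have h4 : ∀ x, HasDerivAt
      (fun x => B*(4*iteratedDeriv 3 u x + x*iteratedDeriv 4 u x) + 2*C*(4*(iteratedDeriv 1 u x*iteratedDeriv 3 u x) + 3*iteratedDeriv 2 u x^2 + u x*iteratedDeriv 4 u x) + E*iteratedDeriv 4 u x)
      (B*(5*iteratedDeriv 4 u x + x*iteratedDeriv 5 u x) + 2*C*(5*(iteratedDeriv 1 u x*iteratedDeriv 4 u x) + 10*(iteratedDeriv 2 u x*iteratedDeriv 3 u x) + u x*iteratedDeriv 5 u x) + E*iteratedDeriv 5 u x) x := by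
    intro x
    have t := (((((hU 3 x).const_mul 4).add
        ((hasDerivAt_id' (𝕜 := ℝ) x).mul (hU 4 x))).const_mul B).add
        ((((((hU 1 x).mul (hU 3 x)).const_mul 4).add
            (((hU 2 x).pow 2).const_mul 3)).add
          ((hU0 x).mul (hU 4 x))).const_mul (2*C))).add
        ((hU 4 x).const_mul E)
    refine t.congr_deriv ?_
    norm_num [iteratedDeriv_one]
    ring
  have hzero : deriv (fun _ : ℝ => (0:ℝ)) = fun _ => (0:ℝ) := deriv_const' 0
  have hev1 : (fun x => 2*A*x + B*(u x + x*iteratedDeriv 1 u x) + 2*C*(u x*iteratedDeriv 1 u x) + D + E*iteratedDeriv 1 u x) =ᶠ[nhds x0] fun _ => (0:ℝ) := by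
    have := h.deriv
    rwa [funext fun x => (h0 x).deriv, hzero] at this
  have hev2 : (fun x => 2*A + B*(2*iteratedDeriv 1 u x + x*iteratedDeriv 2 u x) + 2*C*(iteratedDeriv 1 u x^2 + u x*iteratedDeriv 2 u x) + E*iteratedDeriv 2 u x) =ᶠ[nhds x0] fun _ => (0:ℝ) := by
    have := hev1.deriv
    rwa [funext fun x => (h1 x).deriv, hzero] at this
  have hev3 : (fun x => B*(3*iteratedDeriv 2 u x + x*iteratedDeriv 3 u x) + 2*C*(3*(iteratedDeriv 1 u x*iteratedDeriv 2 u x) + u x*iteratedDeriv 3 u x) + E*iteratedDeriv 3 u x) =ᶠ[nhds x0] fun _ => (0:ℝ) := by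
    have := hev2.deriv
    rwa [funext fun x => (h2 x).deriv, hzero] at this
  have hev4 : (fun x => B*(4*iteratedDeriv 3 u x + x*iteratedDeriv 4 u x) + 2*C*(4*(iteratedDeriv 1 u x*iteratedDeriv 3 u x) + 3*iteratedDeriv 2 u x^2 + u x*iteratedDeriv 4 u x) + E*iteratedDeriv 4 u x) =ᶠ[nhds x0] fun _ => (0:ℝ) := by
    have := hev3.deriv
    rwa [funext fun x => (h3 x).deriv, hzero] at this
  have hev5 : (fun x => B*(5*iteratedDeriv 4 u x + x*iteratedDeriv 5 u x) + 2*C*(5*(iteratedDeriv 1 u x*iteratedDeriv 4 u x) + 10*(iteratedDeriv 2 u x*iteratedDeriv 3 u x) + u x*iteratedDeriv 5 u x) + E*iteratedDeriv 5 u x) =ᶠ[nhds x0] fun _ => (0:ℝ) := by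
    have := hev4.deriv
    rwa [funext fun x => (h4 x).deriv, hzero] at this
  have e3 := hev3.eq_of_nhds
  have e4 := hev4.eq_of_nhds
  have e5 := hev5.eq_of_nhds
  exact ⟨by linear_combination e3, by linear_combination e4, by linear_combination e5⟩

theorem aux_det (X U U1 U2 U3 U4 U5 B C E : ℝ)
    (hP : B * X + 2 * C * U + E ≠ 0)
    (e3 : B * (X * U3 + 3 * U2) + 2 * C * (U * U3 + 3 * (U1 * U2)) + E * U3 = 0)
    (e4 : B * (X * U4 + 4 * U3) + 2 * C * (U * U4 + 4 * (U1 * U3) + 3 * U2 ^ 2) + E * U4 = 0)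
    (e5 : B * (X * U5 + 5 * U4)
      + 2 * C * (U * U5 + 5 * (U1 * U4) + 10 * (U2 * U3)) + E * U5 = 0) :
    U2 * (9 * U5 * U2 ^ 2 + 40 * U3 ^ 3 - 45 * U2 * U3 * U4) = 0 := by
  have hv : ![B, 2 * C, E] ≠ 0 := by
    intro h
    apply hP
    have hB := congrFun h 0
    have hC := congrFun h 1
    have hE := congrFun h 2
    simp at hB hC hE
    simp [hB, hC, hE]
  set M : Matrix (Fin 3) (Fin 3) ℝ :=
    !![X*U3+3*U2, U*U3+3*(U1*U2), U3;
       X*U4+4*U3, U*U4+4*(U1*U3)+3*U2^2, U4;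
       X*U5+5*U4, U*U5+5*(U1*U4)+10*(U2*U3), U5] with hM
  have hMv : M.mulVec ![B, 2 * C, E] = 0 := by
    funext i
    fin_cases i <;>
      simp [hM, Matrix.mulVec, dotProduct, Fin.sum_univ_three]
    · linear_combination e3
    · linear_combination e4
    · linear_combination e5
  have hdet : M.det = 0 := Matrix.exists_mulVec_eq_zero_iff.mp ⟨_, hv, hMv⟩
  rw [Matrix.det_fin_three] at hdet
  simp [hM] at hdet
  linear_combination hdet

/-- A smooth positive function whose graph lies on a nondegenerate conic satisfies the
fifth-order equation of conics `9u⁽⁵⁾(u'')² + 40(u''')³ - 45u''u'''u⁽⁴⁾ = 0`. -/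
theorem stmt_3 (u : ℝ → ℝ) (p q A B C D E F : ℝ) (hu : ContDiff ℝ (⊤ : ℕ∞) u)
    (hupos : ∀ x ∈ Set.Ioo p q, u x > 0)
    (hconic : ∀ x ∈ Set.Ioo p q,
      A * x ^ 2 + B * x * u x + C * (u x) ^ 2 + D * x + E * u x + F = 0)
    (hne : ¬ (A = 0 ∧ B = 0 ∧ C = 0 ∧ D = 0 ∧ E = 0 ∧ F = 0))
    (hnondeg : ∀ x ∈ Set.Ioo p q, B * x + 2 * C * u x + E ≠ 0) :
    ∀ x ∈ Set.Ioo p q,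
      9 * iteratedDeriv 5 u x * (iteratedDeriv 2 u x) ^ 2
        + 40 * (iteratedDeriv 3 u x) ^ 3
        - 45 * iteratedDeriv 2 u x * iteratedDeriv 3 u x * iteratedDeriv 4 u x = 0 := by
  have hkey : ∀ x ∈ Set.Ioo p q, iteratedDeriv 2 u x *
      (9 * iteratedDeriv 5 u x * (iteratedDeriv 2 u x) ^ 2
        + 40 * (iteratedDeriv 3 u x) ^ 3
        - 45 * iteratedDeriv 2 u x * iteratedDeriv 3 u x * iteratedDeriv 4 u x) = 0 := by
    intro x hx
    have hev : (fun y => A * y ^ 2 + B * (y * u y) + C * (u y ^ 2) + D * y + E * u y + F)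
        =ᶠ[nhds x] fun _ => (0:ℝ) := by
      filter_upwards [Ioo_mem_nhds hx.1 hx.2] with y hy
      linear_combination hconic y hy
    obtain ⟨e3, e4, e5⟩ := aux_chain u hu A B C D E F x hev
    have := aux_det x (u x) (iteratedDeriv 1 u x) (iteratedDeriv 2 u x) (iteratedDeriv 3 u x)
      (iteratedDeriv 4 u x) (iteratedDeriv 5 u x) B C E (hnondeg x hx)
      (by linear_combination e3) (by linear_combination e4) (by linear_combination e5)
    linear_combination this
  have hc : ∀ n : ℕ, Continuous (iteratedDeriv n u) := by
    intro n
    rw [iteratedDeriv_eq_iterate]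
    have hu' : ContDiff ℝ ((⊤:ℕ∞) : WithTop ℕ∞) u := hu.of_le (by simp)
    exact (hu'.iterate_deriv n).continuous
  have hcont : Continuous (fun x => 9 * iteratedDeriv 5 u x * (iteratedDeriv 2 u x) ^ 2
        + 40 * (iteratedDeriv 3 u x) ^ 3
        - 45 * iteratedDeriv 2 u x * iteratedDeriv 3 u x * iteratedDeriv 4 u x) := by
    exact (((continuous_const.mul (hc 5)).mul ((hc 2).pow 2)).add
        (continuous_const.mul ((hc 3).pow 3))).sub
      (((continuous_const.mul (hc 2)).mul (hc 3)).mul (hc 4))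
  intro x hx
  rcases eq_or_ne (iteratedDeriv 2 u x) 0 with h2 | h2
  · by_cases hloc : ∀ᶠ y in nhds x, iteratedDeriv 2 u y = 0
    · have h3 : iteratedDeriv 3 u x = 0 := by
        have hev : iteratedDeriv 2 u =ᶠ[nhds x] fun _ => (0:ℝ) := hloc
        have := hev.deriv_eq
        rw [iteratedDeriv_succ]
        simpa using this
      rw [h2, h3]
      ring
    · have hfreq : ∃ᶠ y in nhds x, iteratedDeriv 2 u y ≠ 0 := by
        rwa [Filter.not_eventually] at hloc
      by_contra hne0
      have hev_ne : ∀ᶠ y in nhds x,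
          (9 * iteratedDeriv 5 u y * (iteratedDeriv 2 u y) ^ 2
            + 40 * (iteratedDeriv 3 u y) ^ 3
            - 45 * iteratedDeriv 2 u y * iteratedDeriv 3 u y * iteratedDeriv 4 u y) ≠ 0 :=
        hcont.continuousAt.eventually_ne hne0
      have hmem : ∀ᶠ y in nhds x, y ∈ Set.Ioo p q := Ioo_mem_nhds hx.1 hx.2
      obtain ⟨y, hy2, hyne, hymem⟩ := (hfreq.and_eventually (hev_ne.and hmem)).exists
      rcases mul_eq_zero.mp (hkey y hymem) with h | h
      · exact hy2 h
      · exact hyne h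
  · rcases mul_eq_zero.mp (hkey x hx) with h | h
    · exact absurd h h2
    · exact h
end

section
/- Fix K ∈ ℝ and let u : ℝ → ℝ be a smooth solution of u'' = (1/2)·u' + K·exp(-2x)·(u')³ on an open interval I. Define I₁(x) = (2K·exp(-2x)·(u'(x))² - 1) / (u(x)·(2K·exp(-2x)·(u'(x))² - 1) + 2·u'(x)). Then on any subinterval of I where the denominator of I₁ is nonzero, the function I₁ is constant (its derivative vanishes). -/
/-- The function `I₁` is a first integral of `u'' = u'/2 + K e^{-2x}(u')³`:
its derivative vanishes wherever its denominator is nonzero. -/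
theorem stmt_6 (K p q : ℝ) (u : ℝ → ℝ) (hu : ContDiff ℝ (⊤ : ℕ∞) u)
    (hode : ∀ x ∈ Set.Ioo p q,
      iteratedDeriv 2 u x =
        (1 / 2) * deriv u x + K * Real.exp (-2 * x) * (deriv u x) ^ 3)
    (I₁ : ℝ → ℝ)
    (hI₁ : ∀ x, I₁ x =
      (2 * K * Real.exp (-2 * x) * (deriv u x) ^ 2 - 1) /
        (u x * (2 * K * Real.exp (-2 * x) * (deriv u x) ^ 2 - 1) + 2 * deriv u x))
    (p' q' : ℝ) (hsub : Set.Ioo p' q' ⊆ Set.Ioo p q)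
    (hden : ∀ x ∈ Set.Ioo p' q',
      u x * (2 * K * Real.exp (-2 * x) * (deriv u x) ^ 2 - 1) + 2 * deriv u x ≠ 0) :
    ∀ x ∈ Set.Ioo p' q', deriv I₁ x = 0 := by
  intro x hx
  have hx' := hsub hx
  set v := deriv u x with hv
  set w := deriv (deriv u) x with hwdef
  have hu' : ContDiff ℝ (⊤ : ℕ∞) u := hu.of_le (by simp)
  have hdu := (contDiff_infty_iff_deriv.mp hu').2
  have hw : w = (1 / 2) * v + K * Real.exp (-2 * x) * v ^ 3 := by
    have := hode x hx'
    rwa [iteratedDeriv_succ, iteratedDeriv_one] at this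
  have h1 : HasDerivAt u v x := (hu.differentiable (by simp) x).hasDerivAt
  have h2 : HasDerivAt (deriv u) w x := (hdu.differentiable (by simp) x).hasDerivAt
  have hexp : HasDerivAt (fun y : ℝ => Real.exp (-2 * y))
      (Real.exp (-2 * x) * (-2)) x := by
    have h := ((hasDerivAt_id x).const_mul (-2 : ℝ))
    have h2' := (Real.hasDerivAt_exp (-2 * x)).comp x h
    simpa [Function.comp_def] using h2'
  set E := Real.exp (-2 * x) with hE
  have hf : HasDerivAt
      (fun y => 2 * K * Real.exp (-2 * y) * (deriv u y) ^ 2 - 1)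
      ((2 * K * (E * (-2))) * v ^ 2 + (2 * K * E) * (2 * v ^ 1 * w)) x := by
    have := ((hexp.const_mul (2 * K)).mul (h2.pow 2)).sub_const 1
    refine this.congr_deriv ?_
    simp [v, E]
  have hg : HasDerivAt
      (fun y => u y * (2 * K * Real.exp (-2 * y) * (deriv u y) ^ 2 - 1) + 2 * deriv u y)
      (v * (2 * K * E * v ^ 2 - 1) +
        u x * ((2 * K * (E * (-2))) * v ^ 2 + (2 * K * E) * (2 * v ^ 1 * w)) + 2 * w) x := by
    have := (h1.mul hf).add (h2.const_mul 2)
    exact this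
  have hg0 := hden x hx
  have hdiv : HasDerivAt (fun y =>
      (2 * K * Real.exp (-2 * y) * (deriv u y) ^ 2 - 1) /
        (u y * (2 * K * Real.exp (-2 * y) * (deriv u y) ^ 2 - 1) + 2 * deriv u y)) _ x :=
    hf.div hg hg0
  have hIeq : I₁ = fun y =>
      (2 * K * Real.exp (-2 * y) * (deriv u y) ^ 2 - 1) /
        (u y * (2 * K * Real.exp (-2 * y) * (deriv u y) ^ 2 - 1) + 2 * deriv u y) :=
    funext hI₁
  rw [hIeq, hdiv.deriv]
  rw [div_eq_zero_iff]
  left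
  rw [hw]
  ring
end

section
/- Fix K ∈ ℝ and let u : ℝ → ℝ be a smooth solution of u'' = (1/2)·u' + K·exp(-2x)·(u')³ on an open interval I. Define I₂(x) = 2·(2K·exp(-2x)·(u'(x))² - 1) / (u(x)²·(2K·exp(-2x)·(u'(x))² - 1) + 4·u'(x)·(u(x) - u'(x))). Then on any subinterval of I where the denominator of I₂ is nonzero, I₂ is constant. -/
/-- The function `I₂` is a second first integral of `u'' = u'/2 + K e^{-2x}(u')³`:
its derivative vanishes wherever its denominator is nonzero. -/
theorem stmt_7 (K p q : ℝ) (u : ℝ → ℝ) (hu : ContDiff ℝ (⊤ : ℕ∞) u)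
    (hode : ∀ x ∈ Set.Ioo p q,
      iteratedDeriv 2 u x =
        (1 / 2) * deriv u x + K * Real.exp (-2 * x) * (deriv u x) ^ 3)
    (I₂ : ℝ → ℝ)
    (hI₂ : ∀ x, I₂ x =
      2 * (2 * K * Real.exp (-2 * x) * (deriv u x) ^ 2 - 1) /
        ((u x) ^ 2 * (2 * K * Real.exp (-2 * x) * (deriv u x) ^ 2 - 1)
          + 4 * deriv u x * (u x - deriv u x)))
    (p' q' : ℝ) (hsub : Set.Ioo p' q' ⊆ Set.Ioo p q)
    (hden : ∀ x ∈ Set.Ioo p' q',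
      (u x) ^ 2 * (2 * K * Real.exp (-2 * x) * (deriv u x) ^ 2 - 1)
        + 4 * deriv u x * (u x - deriv u x) ≠ 0) :
    ∀ x ∈ Set.Ioo p' q', deriv I₂ x = 0 := by
  intro x hx
  have hxpq := hsub hx
  have hud : Differentiable ℝ u := hu.differentiable (by simp)
  have hvd : Differentiable ℝ (deriv u) := by
    have h : ContDiff ℝ ((⊤ : ℕ∞) : WithTop ℕ∞) u := hu.of_le (by simp)
    exact (contDiff_infty_iff_deriv.mp h).2.differentiable (by simp)
  have hU : HasDerivAt u (deriv u x) x := (hud x).hasDerivAt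
  have hV : HasDerivAt (deriv u)
      ((1 / 2) * deriv u x + K * Real.exp (-2 * x) * (deriv u x) ^ 3) x := by
    have h := (hvd x).hasDerivAt
    have h2 : deriv (deriv u) x
        = (1 / 2) * deriv u x + K * Real.exp (-2 * x) * (deriv u x) ^ 3 := by
      have h3 := hode x hxpq
      rwa [iteratedDeriv_succ, iteratedDeriv_one] at h3
    rwa [h2] at h
  have he : HasDerivAt (fun y : ℝ => Real.exp (-2 * y))
      (Real.exp (-2 * x) * (-2)) x := by
    have h : HasDerivAt (fun y : ℝ => -2 * y) (-2) x := by
      simpa using (hasDerivAt_id x).const_mul (-2 : ℝ)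
    simpa using h.exp
  set v' : ℝ := (1 / 2) * deriv u x + K * Real.exp (-2 * x) * (deriv u x) ^ 3 with hv'
  -- numerator
  have hA : HasDerivAt (fun y => 2 * K * Real.exp (-2 * y) * (deriv u y) ^ 2 - 1)
      ((2 * K) * (Real.exp (-2 * x) * (-2)) * (deriv u x) ^ 2
        + 2 * K * Real.exp (-2 * x) * (2 * deriv u x ^ 1 * v')) x := by
    have h1 := (he.const_mul (2 * K)).mul (hV.pow 2)
    have h2 := h1.sub_const 1
    exact h2.congr_deriv (by simp)
  have hN := hA.const_mul 2
  have hD : HasDerivAt (fun y => (u y) ^ 2 * (2 * K * Real.exp (-2 * y) * (deriv u y) ^ 2 - 1)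
        + 4 * deriv u y * (u y - deriv u y))
      ((2 * u x ^ 1 * deriv u x) * (2 * K * Real.exp (-2 * x) * (deriv u x) ^ 2 - 1)
        + (u x) ^ 2 * ((2 * K) * (Real.exp (-2 * x) * (-2)) * (deriv u x) ^ 2
          + 2 * K * Real.exp (-2 * x) * (2 * deriv u x ^ 1 * v'))
        + ((4 * v') * (u x - deriv u x) + (4 * deriv u x) * (deriv u x - v'))) x := by
    have h1 := ((hU.pow 2).mul hA).add ((hV.const_mul 4).mul (hU.sub hV))
    exact h1.congr_deriv (by simp)
  have hDne := hden x hx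
  have hQ : HasDerivAt (fun y => 2 * (2 * K * Real.exp (-2 * y) * (deriv u y) ^ 2 - 1) /
      ((u y) ^ 2 * (2 * K * Real.exp (-2 * y) * (deriv u y) ^ 2 - 1)
        + 4 * deriv u y * (u y - deriv u y))) _ x := hN.div hD hDne
  have hfun : I₂ = fun y =>
      2 * (2 * K * Real.exp (-2 * y) * (deriv u y) ^ 2 - 1) /
        ((u y) ^ 2 * (2 * K * Real.exp (-2 * y) * (deriv u y) ^ 2 - 1)
          + 4 * deriv u y * (u y - deriv u y)) := funext hI₂
  rw [hfun, hQ.deriv, div_eq_zero_iff]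
  left
  rw [hv']
  ring
end

section
/- Let f : ℝ → ℝ be continuous, ε ∈ ℝ, and let u be a smooth solution of u'' = f(x)·u' + (u')² on an open interval I such that exp(-u(x)) - ε > 0 on I. Then v(x) := -Real.log (exp(-u(x)) - ε) is also a solution of v'' = f(x)·v' + (v')² on I. -/
/-- The time-ε flow of `e^u ∂_u`, i.e. `u ↦ -log(e^{-u} - ε)`, is a point symmetry of
`u'' = f(x)u' + (u')²`. -/
theorem stmt_11 (f : ℝ → ℝ) (hf : Continuous f) (ε p q : ℝ) (u : ℝ → ℝ)
    (hu : ContDiff ℝ (⊤ : ℕ∞) u)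
    (hode : ∀ x ∈ Set.Ioo p q,
      iteratedDeriv 2 u x = f x * deriv u x + (deriv u x) ^ 2)
    (hpos : ∀ x ∈ Set.Ioo p q, Real.exp (-u x) - ε > 0)
    (v : ℝ → ℝ) (hv : ∀ x, v x = -Real.log (Real.exp (-u x) - ε)) :
    ∀ x ∈ Set.Ioo p q,
      iteratedDeriv 2 v x = f x * deriv v x + (deriv v x) ^ 2 := by
  have hvfun : v = fun y => -Real.log (Real.exp (-u y) - ε) := funext hv
  have hud : Differentiable ℝ u := hu.differentiable (by simp)
  have hu1 : ContDiff ℝ ((⊤ : ℕ∞) : WithTop ℕ∞) (deriv u) :=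
    (contDiff_infty_iff_deriv.mp (hu.of_le (by simp))).2
  have hu1d : Differentiable ℝ (deriv u) := hu1.differentiable (by simp)
  set S : Set ℝ := {y | Real.exp (-u y) - ε > 0} with hSdef
  have hSopen : IsOpen S := by
    have : Continuous fun y => Real.exp (-u y) - ε :=
      (Real.continuous_exp.comp (hu.continuous.neg)).sub continuous_const
    exact isOpen_lt continuous_const this
  -- derivative of v on S
  have hvderiv : ∀ y ∈ S, HasDerivAt v
      (deriv u y * Real.exp (-u y) / (Real.exp (-u y) - ε)) y := by
    intro y hy
    have hw : HasDerivAt (fun z => Real.exp (-u z) - ε)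
        (Real.exp (-u y) * (-deriv u y)) y :=
      (((hud y).hasDerivAt).neg.exp).sub_const ε
    have hlog := (hw.log (ne_of_gt hy)).neg
    rw [hvfun]
    exact hlog.congr_deriv (by ring)
  intro x hx
  have hxS : x ∈ S := hpos x hx
  set a := deriv u x with ha
  set e := Real.exp (-u x) with he
  set w := Real.exp (-u x) - ε with hw0
  have hwpos : 0 < w := hpos x hx
  have hwne : w ≠ 0 := ne_of_gt hwpos
  -- deriv v agrees with g near x
  set g : ℝ → ℝ := fun y => deriv u y * Real.exp (-u y) / (Real.exp (-u y) - ε) with hg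
  have heq : deriv v =ᶠ[nhds x] g := by
    filter_upwards [hSopen.mem_nhds hxS] with y hy
    exact (hvderiv y hy).deriv
  have hdvx : deriv v x = g x := (hvderiv x hxS).deriv
  -- derivative of g at x
  have hb : HasDerivAt (deriv u) (iteratedDeriv 2 u x) x := by
    have : iteratedDeriv 2 u x = deriv (deriv u) x := by
      simp [iteratedDeriv_succ, iteratedDeriv_zero]
    rw [this]
    exact (hu1d x).hasDerivAt
  have hexp : HasDerivAt (fun z => Real.exp (-u z)) (e * (-a)) x :=
    ((hud x).hasDerivAt).neg.exp
  have hnum : HasDerivAt (fun z => deriv u z * Real.exp (-u z))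
      (iteratedDeriv 2 u x * e + a * (e * (-a))) x := hb.mul hexp
  have hden : HasDerivAt (fun z => Real.exp (-u z) - ε) (e * (-a)) x :=
    hexp.sub_const ε
  have hgd : HasDerivAt g
      (((iteratedDeriv 2 u x * e + a * (e * (-a))) * w - (a * e) * (e * (-a))) / w ^ 2) x :=
    hnum.div hden hwne
  have h2 : iteratedDeriv 2 v x = deriv g x := by
    rw [show iteratedDeriv 2 v = deriv (deriv v) by
      simp [iteratedDeriv_succ, iteratedDeriv_zero]]
    exact heq.deriv_eq
  rw [h2, hgd.deriv, hdvx]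
  have hode' : iteratedDeriv 2 u x = f x * a + a ^ 2 := hode x hx
  rw [hode']
  show _ = f x * (a * e / w) + (a * e / w) ^ 2
  field_simp
  ring
end
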